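/- If λ ∈ ℂ satisfies |λ − 16| < 64 and λ ≠ 16, then the strange fixed point z = 1 of O_p(·,λ) is a repulsor: the complex derivative of z ↦ O_p(z,λ) at z = 1 has modulus strictly greater than 1. -/

import Mathlib

/-!
Since `1 + 4z + 6z² + 4z³ + z⁴ = (1 + z)⁴`, the operator is `z ↦ f z / g z` with
`f z = z⁴((1 + z)⁴ − λ)` and `g z = (1 + z)⁴ − λz⁴`. Both take the value `16 − λ` at `1`,
so the quotient rule collapses to `O_p'(1) = (f'(1) − g'(1)) / g(1) = 64 / (16 − λ)`,
whose modulus exceeds `1` exactly when `|λ − 16| < 64`.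
-/

/-- The rational operator of Kim's family (η = μ = 0, parameter `lam`) on
quadratic polynomials, after Möbius conjugation:
`O_p(z,λ) = −z⁴((1−λ)+4z+6z²+4z³+z⁴)/(−1−4z−6z²−4z³+(λ−1)z⁴)`. -/
noncomputable def Op (lam z : ℂ) : ℂ :=
  -z ^ 4 * ((1 - lam) + 4 * z + 6 * z ^ 2 + 4 * z ^ 3 + z ^ 4) /
    (-1 - 4 * z - 6 * z ^ 2 - 4 * z ^ 3 + (lam - 1) * z ^ 4)

theorem HasDerivAt.div_of_eq {𝕜 : Type*} [NontriviallyNormedField 𝕜] {f g : 𝕜 → 𝕜}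
    {f' g' x : 𝕜} (hf : HasDerivAt f f' x) (hg : HasDerivAt g g' x) (hfg : f x = g x)
    (hgx : g x ≠ 0) : HasDerivAt (fun y => f y / g y) ((f' - g') / g x) x := by
  refine (hf.div hg hgx).congr_deriv ?_
  rw [hfg]
  field_simp

theorem Op_eq (lam z : ℂ) :
    Op lam z = z ^ 4 * ((1 + z) ^ 4 - lam) / ((1 + z) ^ 4 - lam * z ^ 4) := by
  rw [Op, ← neg_div_neg_eq]
  congr 1 <;> ring

theorem hasDerivAt_Op_num (lam z : ℂ) :
    HasDerivAt (fun z => z ^ 4 * ((1 + z) ^ 4 - lam))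
      (4 * z ^ 3 * ((1 + z) ^ 4 - lam) + z ^ 4 * (4 * (1 + z) ^ 3)) z := by
  have hsucc : HasDerivAt (fun z : ℂ => 1 + z) 1 z := (hasDerivAt_id z).const_add 1
  refine ((hasDerivAt_pow 4 z).mul ((hsucc.pow 4).sub_const lam)).congr_deriv ?_
  norm_num

theorem hasDerivAt_Op_den (lam z : ℂ) :
    HasDerivAt (fun z => (1 + z) ^ 4 - lam * z ^ 4)
      (4 * (1 + z) ^ 3 - lam * (4 * z ^ 3)) z := by
  have hsucc : HasDerivAt (fun z : ℂ => 1 + z) 1 z := (hasDerivAt_id z).const_add 1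
  refine ((hsucc.pow 4).sub ((hasDerivAt_pow 4 z).const_mul lam)).congr_deriv ?_
  norm_num

theorem hasDerivAt_Op_one {lam : ℂ} (hlam : lam ≠ 16) :
    HasDerivAt (Op lam) (64 / (16 - lam)) 1 := by
  have hden : (1 + 1 : ℂ) ^ 4 - lam * 1 ^ 4 ≠ 0 := by
    norm_num
    exact sub_ne_zero.mpr hlam.symm
  have h := (hasDerivAt_Op_num lam 1).div_of_eq (hasDerivAt_Op_den lam 1) (by ring) hden
  rw [funext (Op_eq lam)]
  refine h.congr_deriv ?_
  norm_num
  ring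

/-- If `|λ − 16| < 64` and `λ ≠ 16` then `z = 1` is a repelling fixed point of
`O_p(·,λ)`. -/
theorem one_repulsor (lam : ℂ) (hlam : ‖lam - 16‖ < 64)
    (hlam16 : lam ≠ 16) :
    ‖deriv (fun z => Op lam z) 1‖ > 1 := by
  rw [(hasDerivAt_Op_one hlam16).deriv, norm_div, norm_sub_rev, gt_iff_lt,
    one_lt_div (norm_pos_iff.mpr (sub_ne_zero.mpr hlam16))]
  simpa using hlam
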